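/- arXiv:2009.08230 — 5 statements merged into one kernel-verified Lean document; each statement's English description precedes it below -/
import Mathlib

section
/- Let f : ℂ^(m×n) → ℂ be differentiable. Then f satisfies the homogeneity property f(UN) = (det N)^α · f(U) for all N ∈ ℂ^(n×n) if and only if f satisfies the system of partial differential equations Uᵀ (∂f/∂U) = α · I · f, where (Uᵀ ∂/∂U)_{ij} = Σ_{d=1}^m U_{di} ∂/∂U_{dj}. -/
/-!
The `(i, j)` entry of `Uᵀ ∂f/∂U` is the derivative of `f` at `U` in the direction `U E_ij`,
`E_ij` the matrix unit. Differentiating `f (U (1 + t E_ij)) = (1 + t δ_ij)^α f U` at `t = 0` gives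
the differential equations.

Conversely, the matrices `N` with `f (U N) = (det N)^α f U` for all `U` form a monoid. It contains
the transvections `1 + c E_ij`, `i ≠ j`: since `E_ij² = 0`, the equation `(i, j)` says that `f` is
constant along `c ↦ U (1 + c E_ij)`. It contains `diag(1, …, s, …, 1)`: along this line
`φ(s) = f (U diag(1, …, s, …, 1))` satisfies the Euler equation `s φ' = α φ`, whose entire
solutions are the multiples of `s^α`. By Gaussian elimination these matrices generate the whole
multiplicative monoid of `n × n` matrices, singular ones included.
-/

open Matrix

theorem eq_pow_mul_of_hasDerivAt_euler {φ φ' : ℂ → ℂ} (α : ℕ)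
    (hφ : ∀ s, HasDerivAt φ (φ' s) s) (heuler : ∀ s, s * φ' s = α * φ s) (s : ℂ) :
    φ s = s ^ α * φ 1 := by
  -- `φ s * s ^ (-α)` is constant on the connected set `{0}ᶜ`; continuity then covers `s = 0`.
  set χ : ℂ → ℂ := fun s => φ s * s ^ (-(α : ℤ))
  have hχ : ∀ z ≠ 0, HasDerivAt χ (z ^ (-(α : ℤ) - 1) * (z * φ' z - α * φ z)) z := by
    intro z hz
    refine ((hφ z).mul (hasDerivAt_zpow (-(α : ℤ)) z (Or.inl hz))).congr_deriv ?_
    rw [zpow_sub_one₀ hz]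
    field_simp
    push_cast
    ring
  have hχ_const : ∀ z ≠ 0, χ z = χ 1 := fun z hz =>
    isOpen_compl_singleton.is_const_of_deriv_eq_zero
      (isConnected_compl_singleton_of_one_lt_rank (by simp) 0).isPreconnected
      (fun w hw => (hχ w hw).differentiableAt.differentiableWithinAt)
      (fun w hw => by simp [(hχ w hw).deriv, heuler]) hz one_ne_zero
  have hne : Set.EqOn φ (fun s => s ^ α * φ 1) {0}ᶜ := by
    intro z (hz : z ≠ 0)
    have h := hχ_const z hz
    simp only [χ, _root_.zpow_neg, zpow_natCast, one_pow, inv_one, mul_one] at h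
    field_simp at h
    exact h
  have hcont : Continuous φ := continuous_iff_continuousAt.2 fun s => (hφ s).continuousAt
  exact congrFun (Continuous.ext_on (dense_compl_singleton 0) hcont (by fun_prop) hne) s

section MatrixUnits

variable {κ R : Type*} [DecidableEq κ]

theorem diagonal_mulSingle_eq [Ring R] (k : κ) (s : R) :
    diagonal (Pi.mulSingle k s) = (1 - single k k 1) + s • single k k 1 := by
  ext a b
  obtain rfl | hab := eq_or_ne a b
  · obtain rfl | hak := eq_or_ne a k
    · simp
    · simp [hak, Ne.symm hak]
  · have hk : ¬(k = a ∧ k = b) := fun h => hab (h.1 ▸ h.2)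
    simp [one_apply, hab, hk]

theorem det_diagonal_mulSingle [Fintype κ] [CommRing R] (k : κ) (s : R) :
    (diagonal (Pi.mulSingle k s)).det = s := by
  simp [det_diagonal, Finset.prod_pi_mulSingle']

theorem LinearMap.map_mul_single {ι M : Type*} [Fintype ι] [Fintype κ] [DecidableEq ι]
    [CommSemiring R] [AddCommMonoid M] [Module R M] (L : Matrix ι κ R →ₗ[R] M) (U : Matrix ι κ R) (i j : κ) :
    L (U * Matrix.single i j (1 : R)) = ∑ d, U d i • L (Pi.single d (Pi.single j 1)) := by
  have hU : U * Matrix.single i j (1 : R) = ∑ d, U d i • Matrix.single d j (1 : R) := by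
    ext a b
    simp [Matrix.single_apply, Matrix.sum_apply, mul_apply, ite_and]
  rw [hU, map_sum]
  simp only [map_smul, single_eq_of_single_single]
  rfl

end MatrixUnits

section Homogeneity

-- The sup norm, so that `fderiv` on matrices is `fderiv` on `ι → κ → ℂ`.
attribute [local instance] Matrix.normedAddCommGroup Matrix.normedSpace

variable {ι κ : Type*} [Fintype ι] [Fintype κ] {α : ℕ} {f : Matrix ι κ ℂ → ℂ}

theorem hasDerivAt_comp_mul_add_smul (hf : Differentiable ℂ f) (U : Matrix ι κ ℂ)
    (A B : Matrix κ κ ℂ) (t : ℂ) :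
    HasDerivAt (fun s : ℂ => f (U * (A + s • B))) (fderiv ℂ f (U * (A + t • B)) (U * B)) t := by
  have hline : HasDerivAt (fun s : ℂ => U * A + s • (U * B)) (U * B) t :=
    (((hasDerivAt_id' t).smul_const (U * B)).const_add (U * A)).congr_deriv (one_smul ℂ _)
  simp only [Matrix.mul_add, Matrix.mul_smul]
  exact (hf _).hasFDerivAt.comp_hasDerivAt t hline

variable [DecidableEq κ]

theorem fderiv_mul_single_of_homogeneous (hf : Differentiable ℂ f)
    (hhom : ∀ (U : Matrix ι κ ℂ) (N : Matrix κ κ ℂ), f (U * N) = N.det ^ α * f U)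
    (U : Matrix ι κ ℂ) (i j : κ) :
    fderiv ℂ f U (U * single i j (1 : ℂ)) = α * (if i = j then 1 else 0) * f U := by
  set δ : ℂ := if i = j then 1 else 0
  have hdet : ∀ t : ℂ, (1 + t • single i j (1 : ℂ)).det = 1 + t * δ := by
    intro t
    obtain rfl | hij := eq_or_ne i j
    · have hdiag : 1 + t • single i i (1 : ℂ) = diagonal (Pi.mulSingle i (1 + t)) := by
        rw [diagonal_mulSingle_eq, add_smul, one_smul]
        abel
      rw [hdiag, det_diagonal_mulSingle]
      simp [δ]
    · rw [smul_single, smul_eq_mul, mul_one, ← transvection, det_transvection_of_ne _ _ hij]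
      simp [δ, hij]
  have hpoly : HasDerivAt (fun t : ℂ => (1 + t * δ) ^ α * f U) (α * δ * f U) 0 := by
    simpa using (((hasDerivAt_id' 0).mul_const δ).const_add 1).pow α |>.mul_const (f U)
  have hline := hasDerivAt_comp_mul_add_smul hf U 1 (single i j (1 : ℂ)) 0
  simp only [hhom, hdet, zero_smul, add_zero, Matrix.mul_one] at hline
  exact hline.unique hpoly

variable (α f) in
def homogeneitySubmonoid : Submonoid (Matrix κ κ ℂ) where
  carrier := {N | ∀ U : Matrix ι κ ℂ, f (U * N) = N.det ^ α * f U}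
  one_mem' U := by simp
  mul_mem' {A B} hA hB U := by
    rw [← Matrix.mul_assoc, hB, hA, det_mul, mul_pow]
    ring

theorem transvection_mem_homogeneitySubmonoid (hf : Differentiable ℂ f) {i j : κ} (hij : i ≠ j)
    (heuler : ∀ V : Matrix ι κ ℂ, fderiv ℂ f V (V * single i j (1 : ℂ)) = 0) (c : ℂ) :
    transvection i j c ∈ homogeneitySubmonoid α f := by
  intro U
  have hderiv : ∀ t, HasDerivAt (fun s : ℂ => f (U * (1 + s • single i j (1 : ℂ)))) 0 t := by
    intro t
    have hcol : U * (1 + t • single i j (1 : ℂ)) * single i j (1 : ℂ) = U * single i j (1 : ℂ) := by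
      rw [Matrix.mul_assoc, Matrix.add_mul, Matrix.one_mul, smul_mul,
        single_mul_single_of_ne _ _ _ _ hij.symm, smul_zero, add_zero]
    simpa only [← hcol, heuler] using hasDerivAt_comp_mul_add_smul hf U 1 (single i j 1) t
  have hconst := is_const_of_deriv_eq_zero (fun t => (hderiv t).differentiableAt)
    (fun t => (hderiv t).deriv) c 0
  rw [det_transvection_of_ne _ _ hij, one_pow, one_mul]
  simpa [transvection] using hconst

theorem diagonal_mulSingle_mem_homogeneitySubmonoid (hf : Differentiable ℂ f) (k : κ)
    (heuler : ∀ V : Matrix ι κ ℂ, fderiv ℂ f V (V * single k k (1 : ℂ)) = α * f V) (s : ℂ) :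
    diagonal (Pi.mulSingle k s) ∈ homogeneitySubmonoid α f := by
  intro U
  have hderiv : ∀ t, HasDerivAt (fun s : ℂ => f (U * diagonal (Pi.mulSingle k s)))
      (fderiv ℂ f (U * diagonal (Pi.mulSingle k t)) (U * single k k (1 : ℂ))) t := by
    intro t
    simp only [diagonal_mulSingle_eq]
    exact hasDerivAt_comp_mul_add_smul hf U _ _ t
  have hode : ∀ t, t * fderiv ℂ f (U * diagonal (Pi.mulSingle k t)) (U * single k k (1 : ℂ)) =
      α * f (U * diagonal (Pi.mulSingle k t)) := by
    intro t
    have hcol : U * diagonal (Pi.mulSingle k t) * single k k (1 : ℂ) =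
        t • (U * single k k (1 : ℂ)) := by
      rw [diagonal_mulSingle_eq, Matrix.mul_assoc, Matrix.add_mul, Matrix.sub_mul, smul_mul,
        Matrix.one_mul, single_mul_single_same, mul_one, sub_self, zero_add, Matrix.mul_smul]
    rw [← smul_eq_mul, ← map_smul, ← hcol, heuler]
  simpa [det_diagonal_mulSingle] using eq_pow_mul_of_hasDerivAt_euler α hderiv hode s

theorem diagonal_mem_homogeneitySubmonoid (hf : Differentiable ℂ f)
    (heuler : ∀ (k : κ) (V : Matrix ι κ ℂ), fderiv ℂ f V (V * single k k (1 : ℂ)) = α * f V)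
    (D : κ → ℂ) : diagonal D ∈ homogeneitySubmonoid α f := by
  have hD : D ∈ (homogeneitySubmonoid α f).comap (diagonalRingHom κ ℂ).toMonoidHom := by
    rw [← Finset.univ_prod_mulSingle D]
    exact Submonoid.prod_mem _ fun k _ =>
      diagonal_mulSingle_mem_homogeneitySubmonoid hf k (heuler k) (D k)
  exact hD

theorem homogeneitySubmonoid_eq_top (hf : Differentiable ℂ f)
    (heuler : ∀ (V : Matrix ι κ ℂ) (i j : κ),
      fderiv ℂ f V (V * single i j (1 : ℂ)) = α * (if i = j then 1 else 0) * f V) :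
    homogeneitySubmonoid α f = ⊤ := by
  refine eq_top_iff.2 fun N _ =>
    diagonal_transvection_induction (· ∈ homogeneitySubmonoid α f) N ?_ ?_ ?_
  · exact fun D _ => diagonal_mem_homogeneitySubmonoid hf (fun k V => by simpa using heuler V k k) D
  · exact fun t => transvection_mem_homogeneitySubmonoid hf t.hij
      (fun V => by simpa [t.hij] using heuler V t.i t.j) t.c
  · exact fun A B => mul_mem

end Homogeneity

/-- A differentiable `f : ℂ^(m×n) → ℂ` satisfies the homogeneity
property `f(UN) = (det N)^α f(U)` for all `N ∈ ℂ^(n×n)` iff it satisfies the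
system of PDEs `Uᵀ (∂f/∂U) = α · I · f`. -/
theorem stmt0 {m n : ℕ} (α : ℕ) (f : (Fin m → Fin n → ℂ) → ℂ)
    (hf : Differentiable ℂ f) :
    (∀ (U : Fin m → Fin n → ℂ) (N : Matrix (Fin n) (Fin n) ℂ),
        f (fun a b => ∑ c, U a c * N c b) = N.det ^ α * f U) ↔
    (∀ (U : Fin m → Fin n → ℂ) (i j : Fin n),
        (∑ d, U d i * fderiv ℂ f U (Pi.single d (Pi.single j 1))) =
          (α : ℂ) * (if i = j then 1 else 0) * f U) := by
  have hsum (U : Fin m → Fin n → ℂ) (i j : Fin n) :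
      ∑ d, U d i * fderiv ℂ f U (Pi.single d (Pi.single j 1)) =
        fderiv ℂ f U (of U * single i j (1 : ℂ)) :=
    (LinearMap.map_mul_single (fderiv ℂ f U).toLinearMap (of U) i j).symm
  constructor
  · intro hhom U i j
    rw [hsum]
    exact fderiv_mul_single_of_homogeneous hf hhom (of U) i j
  · intro heuler U N
    have htop := homogeneitySubmonoid_eq_top hf fun V i j => (hsum V i j).symm.trans (heuler V i j)
    exact (Submonoid.eq_top_iff' _).1 htop N U
end

section
/- Let p : ℂ^(m×n) → ℂ be a nonzero polynomial satisfying the system of partial differential equations E p = C · p for some constant matrix C ∈ ℂ^(n×n), where E = Uᵀ ∂/∂U. Then C = α · I for some α ∈ ℕ₀. -/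
open scoped BigOperators
open MvPolynomial

/-!
The operators `E a b = ∑_d X (d, a) ∂/∂X (d, b)` are derivations satisfying the commutation
relations of `𝔤𝔩ₙ`: `⁅E a b, E c d⁆ = δ_bc E a d - δ_da E c b`, as one checks on the generators.
If `E a b p = M a b • p` for all `a b`, every commutator of two `E`'s kills `p`; the relations then
give `M i j • p = 0` for `i ≠ j` and `(M i i - M j j) • p = 0`. Finally the diagonal operator
`E i i` scales each monomial `U^σ` by its degree `∑_d σ (d, i)` in the `i`-th column, so `M i i`
is such a degree for any monomial of `p`.
-/

namespace MvPolynomial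

section Euler

variable {R : Type*} [CommRing R] {m n : Type*} [Fintype m]

noncomputable def eulerOp (a b : n) :
    Derivation R (MvPolynomial (m × n) R) (MvPolynomial (m × n) R) :=
  ∑ d : m, (X (d, a) : MvPolynomial (m × n) R) • pderiv (d, b)

theorem eulerOp_apply (a b : n) (q : MvPolynomial (m × n) R) :
    eulerOp a b q = ∑ d, X (d, a) * pderiv (d, b) q := by
  rw [eulerOp, ← Derivation.coeFnAddMonoidHom_apply, map_sum, Finset.sum_apply]
  rfl

theorem eulerOp_X [DecidableEq n] (a b : n) (e : m) (f : n) :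
    eulerOp a b (X (e, f) : MvPolynomial (m × n) R) = if b = f then X (e, a) else 0 := by
  classical
  rw [eulerOp_apply]
  simp only [pderiv_X, Pi.single_apply, Prod.ext_iff]
  by_cases hbf : b = f <;> simp [hbf, eq_comm]

theorem lie_eulerOp [DecidableEq n] (a b c d : n) :
    ⁅eulerOp (R := R) (m := m) a b, eulerOp c d⁆ =
    ((if b = c then eulerOp a d else 0) - if d = a then eulerOp c b else 0 :
      Derivation R (MvPolynomial (m × n) R) (MvPolynomial (m × n) R)) := by
  refine derivation_ext fun ⟨e, f⟩ => ?_
  simp only [Derivation.commutator_apply, eulerOp_X, apply_ite, map_zero]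
  split_ifs <;> simp_all [eulerOp_X]

end Euler

theorem coeff_X_mul_pderiv {R σ : Type*} [CommSemiring R] (k : σ) (q : MvPolynomial σ R)
    (s : σ →₀ ℕ) : coeff s (X k * pderiv k q) = s k * coeff s q := by
  classical
  induction q using MvPolynomial.induction_on' with
  | add p q hp hq => simp [mul_add, hp, hq]
  | monomial t r =>
    rw [X_mul_pderiv_monomial, coeff_smul, coeff_monomial]
    split_ifs with h <;> simp [h, nsmul_eq_mul]

theorem coeff_eulerOp_self {R : Type*} [CommRing R] {m n : Type*} [Fintype m] (a : n)
    (q : MvPolynomial (m × n) R) (s : (m × n) →₀ ℕ) :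
    coeff s (eulerOp a a q) = (∑ d, s (d, a) : ℕ) * coeff s q := by
  simp [eulerOp_apply, coeff_sum, coeff_X_mul_pderiv, Finset.sum_mul]

def IsEulerEigenvector {R m n : Type*} [CommRing R] [Fintype m] (p : MvPolynomial (m × n) R)
    (M : Matrix n n R) : Prop :=
  ∀ a b, eulerOp a b p = M a b • p

namespace IsEulerEigenvector

variable {R : Type*} [CommRing R] {m n : Type*} [Fintype m] {p : MvPolynomial (m × n) R}
  {M : Matrix n n R}

theorem lie_eulerOp_apply (h : IsEulerEigenvector p M) (a b c d : n) :
    ⁅eulerOp (R := R) (m := m) a b, eulerOp c d⁆ p = 0 := by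
  rw [Derivation.commutator_apply, h c d, h a b, Derivation.map_smul, Derivation.map_smul, h a b,
    h c d, smul_smul, smul_smul, mul_comm, sub_self]

variable [IsDomain R]

theorem apply_eq_zero_of_ne [DecidableEq n] (h : IsEulerEigenvector p M) (hp : p ≠ 0) {i j : n}
    (hij : i ≠ j) : M i j = 0 := by
  have := h.lie_eulerOp_apply i i i j
  rw [lie_eulerOp, if_pos rfl, if_neg hij.symm, sub_zero, h] at this
  exact (smul_eq_zero.mp this).resolve_right hp

theorem diag_eq [DecidableEq n] (h : IsEulerEigenvector p M) (hp : p ≠ 0) (i j : n) :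
    M i i = M j j := by
  have := h.lie_eulerOp_apply i j j i
  rw [lie_eulerOp, if_pos rfl, if_pos rfl, Derivation.sub_apply, h, h, ← sub_smul] at this
  exact sub_eq_zero.mp ((smul_eq_zero.mp this).resolve_right hp)

theorem diag_eq_degree (h : IsEulerEigenvector p M) {s : (m × n) →₀ ℕ} (hs : s ∈ p.support)
    (i : n) : M i i = (∑ d, s (d, i) : ℕ) := by
  have := congrArg (coeff s) (h i i)
  rw [coeff_eulerOp_self, coeff_smul, smul_eq_mul] at this
  exact (mul_right_cancel₀ (mem_support_iff.mp hs) this).symm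

theorem exists_eq_natCast_smul_one [DecidableEq n] (h : IsEulerEigenvector p M) (hp : p ≠ 0) :
    ∃ α : ℕ, M = (α : R) • (1 : Matrix n n R) := by
  obtain ⟨s, hs⟩ := support_nonempty.mpr hp
  rcases isEmpty_or_nonempty n with _ | ⟨⟨i₀⟩⟩
  · exact ⟨0, Subsingleton.elim _ _⟩
  refine ⟨∑ d, s (d, i₀), Matrix.ext fun i j => ?_⟩
  rcases eq_or_ne i j with rfl | hij
  · simp [h.diag_eq hp i i₀, h.diag_eq_degree hs]
  · simp [h.apply_eq_zero_of_ne hp hij, hij]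

end IsEulerEigenvector

end MvPolynomial

/-- If a nonzero polynomial `p` on `ℂ^(m×n)` satisfies
`E p = C · p` for a constant matrix `C ∈ ℂ^(n×n)`, where `E = Uᵀ ∂/∂U` is the
generalized Euler operator, then `C = α · I` for some `α ∈ ℕ`. -/
theorem stmt3 {m n : ℕ} (p : MvPolynomial (Fin m × Fin n) ℂ) (hp : p ≠ 0)
    (M : Matrix (Fin n) (Fin n) ℂ)
    (hE : ∀ i j : Fin n,
      (∑ d, X (d, i) * pderiv (d, j) p) = MvPolynomial.C (M i j) * p) :
    ∃ α : ℕ, M = (α : ℂ) • (1 : Matrix (Fin n) (Fin n) ℂ) :=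
  IsEulerEigenvector.exists_eq_natCast_smul_one (fun a b => by rw [eulerOp_apply, hE, C_mul']) hp
end

section
/- Let A ∈ ℝ^(m×m) be symmetric and invertible. For all 1 ≤ i, j ≤ n and all k ∈ ℕ, the commutator of the Euler operator entry E_{ij} and the k-th power of the trace Laplacian satisfies [E_{ij}, (tr Δ_A)^k] = −2k · (Δ_A)_{ij} · (tr Δ_A)^{k−1} as operators on smooth functions on ℝ^(m×n). -/
open scoped BigOperators
open Matrix

/-- Partial derivative `∂/∂U_{ij}` of a function on `ℝ^(m×n)`. -/
noncomputable def pd {m n : ℕ} (i : Fin m) (j : Fin n)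
    (f : (Fin m → Fin n → ℝ) → ℝ) : (Fin m → Fin n → ℝ) → ℝ :=
  fun U => fderiv ℝ f U (Pi.single i (Pi.single j 1))

/-- Entry `(i,j)` of the generalized Euler operator `E = Uᵀ ∂/∂U`. -/
noncomputable def eulerOp {m n : ℕ} (i j : Fin n)
    (f : (Fin m → Fin n → ℝ) → ℝ) : (Fin m → Fin n → ℝ) → ℝ :=
  fun U => ∑ d, U d i * pd d j f U

/-- Entry `(i,j)` of the generalized Laplacian `Δ_A = (∂/∂U)ᵀ A⁻¹ (∂/∂U)`. -/
noncomputable def lapA {m n : ℕ} (A : Matrix (Fin m) (Fin m) ℝ) (i j : Fin n)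
    (f : (Fin m → Fin n → ℝ) → ℝ) : (Fin m → Fin n → ℝ) → ℝ :=
  fun U => ∑ a, ∑ b, A⁻¹ a b * pd a i (pd b j f) U

/-- The trace `tr Δ_A` of the generalized Laplacian. -/
noncomputable def trLapA {m n : ℕ} (A : Matrix (Fin m) (Fin m) ℝ)
    (f : (Fin m → Fin n → ℝ) → ℝ) : (Fin m → Fin n → ℝ) → ℝ :=
  fun U => ∑ c : Fin n, lapA A c c f U

section Aux

variable {m n : ℕ}

abbrev Sm (f : (Fin m → Fin n → ℝ) → ℝ) : Prop := ContDiff ℝ (⊤ : ℕ∞) f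

lemma fderiv_smooth {f : (Fin m → Fin n → ℝ) → ℝ} (hf : Sm f) :
    ContDiff ℝ (⊤ : ℕ∞) (fderiv ℝ f) := hf.fderiv_right (by simp)

lemma pd_smooth {f : (Fin m → Fin n → ℝ) → ℝ} (hf : Sm f) (a : Fin m) (i : Fin n) :
    Sm (pd a i f) := by
  have := (ContinuousLinearMap.apply ℝ ℝ (Pi.single a (Pi.single i 1))).contDiff.comp
    (fderiv_smooth hf)
  exact this

lemma Sm.diff {f : (Fin m → Fin n → ℝ) → ℝ} (hf : Sm f) : Differentiable ℝ f :=
  hf.differentiable (by simp)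

lemma pd_sum {ι : Type*} (s : Finset ι) (g : ι → (Fin m → Fin n → ℝ) → ℝ)
    (hg : ∀ x ∈ s, Sm (g x)) (a : Fin m) (i : Fin n) :
    pd a i (fun U => ∑ x ∈ s, g x U) = fun U => ∑ x ∈ s, pd a i (g x) U := by
  funext U
  simp only [pd, fderiv_fun_sum (fun x hx => (hg x hx).diff.differentiableAt)]
  simp

lemma pd_const_mul {g : (Fin m → Fin n → ℝ) → ℝ} (hg : Sm g) (c : ℝ) (a : Fin m) (i : Fin n) :
    pd a i (fun U => c * g U) = fun U => c * pd a i g U := by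
  funext U
  simp only [pd, fderiv_const_mul hg.diff.differentiableAt]
  simp

lemma pd_sub {g h : (Fin m → Fin n → ℝ) → ℝ} (hg : Sm g) (hh : Sm h) (a : Fin m) (i : Fin n) :
    pd a i (fun U => g U - h U) = fun U => pd a i g U - pd a i h U := by
  funext U
  simp only [pd, fderiv_fun_sub hg.diff.differentiableAt hh.diff.differentiableAt]
  simp

lemma coord_hasFDeriv (d : Fin m) (i : Fin n) (U : Fin m → Fin n → ℝ) :
    HasFDerivAt (fun U : Fin m → Fin n → ℝ => U d i)
      ((ContinuousLinearMap.proj i).comp (ContinuousLinearMap.proj (R := ℝ)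
        (φ := fun _ : Fin m => Fin n → ℝ) d)) U := by
  have := ((ContinuousLinearMap.proj i).comp (ContinuousLinearMap.proj (R := ℝ)
        (φ := fun _ : Fin m => Fin n → ℝ) d)).hasFDerivAt (x := U)
  exact this

lemma coord_smooth (d : Fin m) (i : Fin n) :
    Sm (fun U : Fin m → Fin n → ℝ => U d i) :=
  ((ContinuousLinearMap.proj i).comp (ContinuousLinearMap.proj (R := ℝ)
        (φ := fun _ : Fin m => Fin n → ℝ) d)).contDiff

lemma pd_mulsum (g : Fin m → (Fin m → Fin n → ℝ) → ℝ) (hg : ∀ d, Sm (g d))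
    (b : Fin m) (c i : Fin n) :
    pd b c (fun U => ∑ d, U d i * g d U) =
      fun U => (if i = c then g b U else 0) + ∑ d, U d i * pd b c (g d) U := by
  funext U
  have hdiff : ∀ d : Fin m, DifferentiableAt ℝ (fun U : Fin m → Fin n → ℝ => U d i * g d U) U :=
    fun d => ((coord_smooth d i).diff.differentiableAt).mul (hg d).diff.differentiableAt
  simp only [pd, fderiv_fun_sum (fun d _ => hdiff d)]
  rw [ContinuousLinearMap.sum_apply]
  have hterm : ∀ d : Fin m,
      (fderiv ℝ (fun U : Fin m → Fin n → ℝ => U d i * g d U) U) (Pi.single b (Pi.single c 1)) =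
      U d i * pd b c (g d) U + g d U * ((if d = b then (1:ℝ) else 0) * (if i = c then 1 else 0)) := by
    intro d
    rw [fderiv_fun_mul ((coord_smooth d i).diff.differentiableAt) (hg d).diff.differentiableAt]
    rw [(coord_hasFDeriv d i U).fderiv]
    simp only [ContinuousLinearMap.add_apply, ContinuousLinearMap.smul_apply,
      ContinuousLinearMap.comp_apply, ContinuousLinearMap.proj_apply, smul_eq_mul]
    rw [Pi.single_apply]
    by_cases h : d = b
    · subst h; simp [Pi.single_apply, pd, mul_comm]
    · simp [h, pd]
  rw [Finset.sum_congr rfl (fun d _ => hterm d), Finset.sum_add_distrib]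
  rw [add_comm]
  congr 1
  simp [Finset.sum_ite_eq', mul_comm]

lemma pd_comm {f : (Fin m → Fin n → ℝ) → ℝ} (hf : Sm f) (a b : Fin m) (i j : Fin n)
    (U : Fin m → Fin n → ℝ) :
    pd a i (pd b j f) U = pd b j (pd a i f) U := by
  have hd : Differentiable ℝ (fderiv ℝ f) := (fderiv_smooth hf).differentiable (by simp)
  have key : ∀ (v w : Fin m → Fin n → ℝ),
      fderiv ℝ (fun x => fderiv ℝ f x v) U w = fderiv ℝ (fderiv ℝ f) U w v := by
    intro v w
    have := fderiv_clm_apply (c := fderiv ℝ f) (u := fun _ => v) (hd U) (differentiableAt_const v)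
    rw [show (fun x => fderiv ℝ f x v) = (fun x => (fderiv ℝ f x) ((fun _ => v) x)) from rfl, this]
    simp
  have hsymm := second_derivative_symmetric (f := f) (f' := fderiv ℝ f)
    (f'' := fderiv ℝ (fderiv ℝ f) U) (fun y => (hf.differentiable (by simp) y).hasFDerivAt)
    (hd U).hasFDerivAt
  show fderiv ℝ (fun x => fderiv ℝ f x _) U _ = fderiv ℝ (fun x => fderiv ℝ f x _) U _
  rw [key, key, hsymm]

variable {A : Matrix (Fin m) (Fin m) ℝ} {f g h : (Fin m → Fin n → ℝ) → ℝ}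

lemma euler_smooth (hf : Sm f) (i j : Fin n) : Sm (eulerOp i j f) := by
  unfold eulerOp
  exact ContDiff.sum fun d _ => (coord_smooth d i).mul (pd_smooth hf d j)

lemma lapA_smooth (hf : Sm f) (i j : Fin n) : Sm (lapA A i j f) := by
  unfold lapA
  exact ContDiff.sum fun a _ => ContDiff.sum fun b _ =>
    contDiff_const.mul (pd_smooth (pd_smooth hf b j) a i)

lemma trLapA_smooth (hf : Sm f) : Sm (trLapA A f) := by
  unfold trLapA
  exact ContDiff.sum fun c _ => lapA_smooth hf c c

lemma trLapA_iter_smooth (hf : Sm f) (k : ℕ) : Sm ((trLapA A)^[k] f) := by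
  induction k with
  | zero => exact hf
  | succ k ih => rw [Function.iterate_succ_apply']; exact trLapA_smooth ih

lemma pd_comm' (hf : Sm f) (a b : Fin m) (i j : Fin n) :
    pd a i (pd b j f) = pd b j (pd a i f) := funext (pd_comm hf a b i j)

/-- pd pulls through lapA. -/
lemma pd_lapA (hf : Sm f) (d : Fin m) (e : Fin n) (p q : Fin n) :
    pd d e (lapA A p q f) = lapA A p q (pd d e f) := by
  unfold lapA
  rw [pd_sum _ (g := fun a U => ∑ b, A⁻¹ a b * pd a p (pd b q f) U) (fun a _ => ContDiff.sum fun b _ =>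
    contDiff_const.mul (pd_smooth (pd_smooth hf b q) a p))]
  funext U
  refine Finset.sum_congr rfl fun a _ => ?_
  rw [pd_sum _ (g := fun b U => A⁻¹ a b * pd a p (pd b q f) U) (fun b _ => contDiff_const.mul (pd_smooth (pd_smooth hf b q) a p))]
  refine Finset.sum_congr rfl fun b _ => ?_
  rw [pd_const_mul (pd_smooth (pd_smooth hf b q) a p)]
  congr 1
  rw [pd_comm' (pd_smooth hf b q) d a e p, pd_comm' hf d b e q]

lemma pd_trLapA (hf : Sm f) (d : Fin m) (e : Fin n) :
    pd d e (trLapA A f) = trLapA A (pd d e f) := by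
  unfold trLapA
  rw [pd_sum _ _ (fun c _ => lapA_smooth hf c c)]
  funext U
  exact Finset.sum_congr rfl fun c _ => congrFun (pd_lapA hf d e c c) U

lemma lapA_sum {ι : Type*} (s : Finset ι) (g : ι → (Fin m → Fin n → ℝ) → ℝ)
    (hg : ∀ x ∈ s, Sm (g x)) (p q : Fin n) :
    lapA A p q (fun U => ∑ x ∈ s, g x U) = fun U => ∑ x ∈ s, lapA A p q (g x) U := by
  unfold lapA
  funext U
  have step1 : ∀ a b : Fin m, A⁻¹ a b * pd a p (pd b q (fun U => ∑ x ∈ s, g x U)) U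
      = ∑ x ∈ s, A⁻¹ a b * pd a p (pd b q (g x)) U := by
    intro a b
    rw [pd_sum s g hg b q, pd_sum s _ (fun x hx => pd_smooth (hg x hx) b q) a p, Finset.mul_sum]
  calc (∑ a, ∑ b, A⁻¹ a b * pd a p (pd b q (fun U => ∑ x ∈ s, g x U)) U)
      = ∑ a, ∑ b, ∑ x ∈ s, A⁻¹ a b * pd a p (pd b q (g x)) U :=
        Finset.sum_congr rfl fun a _ => Finset.sum_congr rfl fun b _ => step1 a b
    _ = ∑ x ∈ s, ∑ a, ∑ b, A⁻¹ a b * pd a p (pd b q (g x)) U :=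
        Eq.trans (Finset.sum_congr rfl fun a _ => Finset.sum_comm) Finset.sum_comm
lemma pd_add {g h : (Fin m → Fin n → ℝ) → ℝ} (hg : Sm g) (hh : Sm h) (a : Fin m) (i : Fin n) :
    pd a i (fun U => g U + h U) = fun U => pd a i g U + pd a i h U := by
  funext U
  simp only [pd, fderiv_fun_add hg.diff.differentiableAt hh.diff.differentiableAt]
  simp

lemma lapA_lin {g h : (Fin m → Fin n → ℝ) → ℝ} (hg : Sm g) (hh : Sm h) (c : ℝ) (p q : Fin n) :
    lapA A p q (fun x => c * g x + h x) =
      fun U => c * lapA A p q g U + lapA A p q h U := by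
  unfold lapA
  funext U
  have key : ∀ a b : Fin m,
      pd a p (pd b q (fun x => c * g x + h x)) =
      fun U => c * pd a p (pd b q g) U + pd a p (pd b q h) U := by
    intro a b
    rw [show pd b q (fun x => c * g x + h x)
        = fun U => c * pd b q g U + pd b q h U by
      rw [pd_add (contDiff_const.mul hg) hh b q, pd_const_mul hg c b q]]
    rw [pd_add (contDiff_const.mul (pd_smooth hg b q)) (pd_smooth hh b q) a p,
      pd_const_mul (pd_smooth hg b q) c a p]
  simp only [fun a b => congrFun (key a b) U]
  simp only [Finset.mul_sum]
  rw [← Finset.sum_add_distrib]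
  refine Finset.sum_congr rfl fun a _ => ?_
  rw [← Finset.sum_add_distrib]
  refine Finset.sum_congr rfl fun b _ => ?_
  ring

lemma trLapA_lin {g h : (Fin m → Fin n → ℝ) → ℝ} (hg : Sm g) (hh : Sm h) (c : ℝ) :
    trLapA A (fun x => c * g x + h x) =
      fun U => c * trLapA A g U + trLapA A h U := by
  unfold trLapA
  funext U
  simp only [fun p => congrFun (lapA_lin (A := A) hg hh c p p) U]
  simp only [Finset.mul_sum]
  rw [← Finset.sum_add_distrib]

lemma lapA_lapA_comm {g : (Fin m → Fin n → ℝ) → ℝ} (hg : Sm g) (p q r s : Fin n) :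
    lapA A p q (lapA A r s g) = lapA A r s (lapA A p q g) := by
  have e1 : lapA A p q (lapA A r s g)
      = fun U => ∑ a, ∑ b, A⁻¹ a b * lapA A r s (pd a p (pd b q g)) U := by
    unfold lapA
    funext U
    refine Finset.sum_congr rfl fun a _ => Finset.sum_congr rfl fun b _ => ?_
    congr 1
    show pd a p (pd b q (lapA A r s g)) U = _
    rw [pd_lapA hg b q r s, pd_lapA (pd_smooth hg b q) a p r s]
    rfl
  have e2 : lapA A r s (lapA A p q g)
      = fun U => ∑ a', ∑ b', A⁻¹ a' b' * lapA A p q (pd a' r (pd b' s g)) U := by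
    unfold lapA
    funext U
    refine Finset.sum_congr rfl fun a' _ => Finset.sum_congr rfl fun b' _ => ?_
    congr 1
    show pd a' r (pd b' s (lapA A p q g)) U = _
    rw [pd_lapA hg b' s p q, pd_lapA (pd_smooth hg b' s) a' r p q]
    rfl
  rw [e1, e2]
  funext U
  show (∑ a, ∑ b, A⁻¹ a b * (∑ a', ∑ b', A⁻¹ a' b' * pd a' r (pd b' s (pd a p (pd b q g))) U))
    = ∑ a', ∑ b', A⁻¹ a' b' * (∑ a, ∑ b, A⁻¹ a b * pd a p (pd b q (pd a' r (pd b' s g))) U)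
  have swap4 : ∀ F : Fin m → Fin m → Fin m → Fin m → ℝ,
      (∑ a, ∑ b, ∑ a', ∑ b', F a b a' b') = ∑ a', ∑ b', ∑ a, ∑ b, F a b a' b' := by
    intro F
    calc (∑ a, ∑ b, ∑ a', ∑ b', F a b a' b')
        = ∑ a, ∑ a', ∑ b, ∑ b', F a b a' b' :=
          Finset.sum_congr rfl fun _ _ => Finset.sum_comm
      _ = ∑ a', ∑ a, ∑ b, ∑ b', F a b a' b' := Finset.sum_comm
      _ = ∑ a', ∑ a, ∑ b', ∑ b, F a b a' b' :=
          Finset.sum_congr rfl fun _ _ => Finset.sum_congr rfl fun _ _ => Finset.sum_comm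
      _ = ∑ a', ∑ b', ∑ a, ∑ b, F a b a' b' :=
          Finset.sum_congr rfl fun _ _ => Finset.sum_comm
  have swapd : ∀ (a b a' b' : Fin m),
      pd a' r (pd b' s (pd a p (pd b q g))) U = pd a p (pd b q (pd a' r (pd b' s g))) U := by
    intro a b a' b'
    rw [pd_comm' (pd_smooth hg b q) b' a s p,
        pd_comm' hg b' b s q,
        pd_comm' (pd_smooth (pd_smooth hg b' s) b q) a' a r p,
        pd_comm' (pd_smooth hg b' s) a' b r q]
  simp only [Finset.mul_sum]
  rw [swap4]
  refine Finset.sum_congr rfl fun a' _ => Finset.sum_congr rfl fun b' _ =>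
    Finset.sum_congr rfl fun a _ => Finset.sum_congr rfl fun b _ => ?_
  rw [swapd a b a' b']
  ring

lemma trLapA_lapA_comm {g : (Fin m → Fin n → ℝ) → ℝ} (hg : Sm g) (p q : Fin n) :
    trLapA A (lapA A p q g) = lapA A p q (trLapA A g) := by
  have : trLapA A g = fun U => ∑ c : Fin n, lapA A c c g U := rfl
  rw [this, lapA_sum Finset.univ (fun c => lapA A c c g) (fun c _ => lapA_smooth hg c c) p q]
  unfold trLapA
  funext U
  exact Finset.sum_congr rfl fun c _ => congrFun (lapA_lapA_comm hg c c p q) U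

lemma trLapA_iter_lapA {g : (Fin m → Fin n → ℝ) → ℝ} (hg : Sm g) (p q : Fin n) (k : ℕ) :
    (trLapA A)^[k] (lapA A p q g) = lapA A p q ((trLapA A)^[k] g) := by
  induction k with
  | zero => rfl
  | succ k ih =>
      rw [Function.iterate_succ_apply', Function.iterate_succ_apply', ih,
        trLapA_lapA_comm (trLapA_iter_smooth hg k) p q]

lemma trLapA_iter_lin {g h : (Fin m → Fin n → ℝ) → ℝ} (hg : Sm g) (hh : Sm h) (c : ℝ) (k : ℕ) :
    (trLapA A)^[k] (fun x => c * g x + h x) =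
      fun U => c * (trLapA A)^[k] g U + (trLapA A)^[k] h U := by
  induction k generalizing g h with
  | zero => rfl
  | succ k ih =>
      rw [Function.iterate_succ_apply, Function.iterate_succ_apply,
        Function.iterate_succ_apply, trLapA_lin hg hh c]
      exact ih (trLapA_smooth hg) (trLapA_smooth hh)
lemma inv_symm (hAs : Aᵀ = A) : ∀ a b : Fin m, A⁻¹ a b = A⁻¹ b a := by
  intro a b
  conv_rhs => rw [← hAs]
  rw [← Matrix.transpose_nonsing_inv]
  rfl

lemma pd_eulerOp (hf : Sm f) (i j : Fin n) (b : Fin m) (c : Fin n) :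
    pd b c (eulerOp i j f) =
      fun U => (if i = c then pd b j f U else 0) + ∑ d, U d i * pd b c (pd d j f) U := by
  show pd b c (fun U => ∑ d, U d i * pd d j f U) = _
  exact pd_mulsum (fun d => pd d j f) (fun d => pd_smooth hf d j) b c i

lemma pd_pd_eulerOp (hf : Sm f) (i j : Fin n) (a b : Fin m) (c : Fin n) :
    pd a c (pd b c (eulerOp i j f)) =
      fun U => (if i = c then pd a c (pd b j f) U + pd b c (pd a j f) U else 0)
        + ∑ d, U d i * pd a c (pd b c (pd d j f)) U := by
  rw [pd_eulerOp hf i j b c]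
  by_cases hc : i = c
  · subst hc
    simp only [eq_self_iff_true, if_true]
    have hsum : Sm (fun U => ∑ d, U d i * pd b i (pd d j f) U) :=
      ContDiff.sum fun d _ => (coord_smooth d i).mul (pd_smooth (pd_smooth hf d j) b i)
    rw [pd_add (pd_smooth hf b j) hsum a i,
      pd_mulsum (fun d => pd b i (pd d j f))
        (fun d => pd_smooth (pd_smooth hf d j) b i) a i i]
    funext U
    simp only [eq_self_iff_true, if_true]
    ring
  · simp only [if_neg hc, zero_add]
    rw [pd_mulsum (fun d => pd b c (pd d j f))
      (fun d => pd_smooth (pd_smooth hf d j) b c) a c i]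
    funext U
    simp [hc]

/-- Base commutator: `tr Δ_A (E_{ij} f) = 2 (Δ_A)_{ij} f + E_{ij} (tr Δ_A f)`. -/
lemma base_comm (hAs : Aᵀ = A) (hf : Sm f) (i j : Fin n) :
    trLapA A (eulerOp i j f) =
      fun U => 2 * lapA A i j f U + eulerOp i j (trLapA A f) U := by
  funext U
  show (∑ c : Fin n, ∑ a, ∑ b, A⁻¹ a b * pd a c (pd b c (eulerOp i j f)) U) = _
  have expand : ∀ (c : Fin n) (a b : Fin m),
      A⁻¹ a b * pd a c (pd b c (eulerOp i j f)) U =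
      (if i = c then A⁻¹ a b * (pd a c (pd b j f) U + pd b c (pd a j f) U) else 0)
        + ∑ d, A⁻¹ a b * (U d i * pd a c (pd b c (pd d j f)) U) := by
    intro c a b
    rw [congrFun (pd_pd_eulerOp hf i j a b c) U, mul_add, Finset.mul_sum]
    by_cases hc : i = c <;> simp [hc]
  simp only [expand, Finset.sum_add_distrib]
  -- First part: the ite triple sum collapses at c = i and gives 2 * lapA A i j f U
  have part1 : (∑ c : Fin n, ∑ a, ∑ b,
      (if i = c then A⁻¹ a b * (pd a c (pd b j f) U + pd b c (pd a j f) U) else 0))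
      = 2 * lapA A i j f U := by
    have collapse : ∀ c : Fin n, (∑ a, ∑ b : Fin m,
        (if i = c then A⁻¹ a b * (pd a c (pd b j f) U + pd b c (pd a j f) U) else 0))
        = if i = c then
            (∑ a, ∑ b : Fin m, A⁻¹ a b * (pd a c (pd b j f) U + pd b c (pd a j f) U)) else 0 := by
      intro c
      by_cases hc : i = c <;> simp [hc]
    simp only [collapse, Finset.sum_ite_eq, Finset.mem_univ, if_pos]
    have s2 : (∑ a, ∑ b : Fin m, A⁻¹ a b * pd b i (pd a j f) U)
        = ∑ a, ∑ b : Fin m, A⁻¹ a b * pd a i (pd b j f) U := by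
      rw [Finset.sum_comm]
      exact Finset.sum_congr rfl fun a _ => Finset.sum_congr rfl fun b _ => by
        rw [inv_symm hAs b a]
    simp only [mul_add, Finset.sum_add_distrib, s2]
    show (lapA A i j f U) + (lapA A i j f U) = 2 * lapA A i j f U
    ring
  -- Second part equals `E_{ij} (tr Δ_A f) U`
  have part2 : (∑ c : Fin n, ∑ a, ∑ b, ∑ d,
        A⁻¹ a b * (U d i * pd a c (pd b c (pd d j f)) U))
      = eulerOp i j (trLapA A f) U := by
    have swap4 : ∀ (F : Fin n → Fin m → Fin m → Fin m → ℝ),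
        (∑ c : Fin n, ∑ a, ∑ b, ∑ d : Fin m, F c a b d)
          = ∑ d : Fin m, ∑ c : Fin n, ∑ a, ∑ b : Fin m, F c a b d := by
      intro F
      calc (∑ c : Fin n, ∑ a, ∑ b, ∑ d : Fin m, F c a b d)
          = ∑ c : Fin n, ∑ a, ∑ d, ∑ b : Fin m, F c a b d :=
            Finset.sum_congr rfl fun _ _ => Finset.sum_congr rfl fun _ _ => Finset.sum_comm
        _ = ∑ c : Fin n, ∑ d, ∑ a, ∑ b : Fin m, F c a b d :=
            Finset.sum_congr rfl fun _ _ => Finset.sum_comm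
        _ = ∑ d : Fin m, ∑ c : Fin n, ∑ a, ∑ b : Fin m, F c a b d := Finset.sum_comm
    rw [swap4]
    show _ = ∑ d, U d i * pd d j (trLapA A f) U
    refine Finset.sum_congr rfl fun d _ => ?_
    rw [pd_trLapA hf d j]
    have pull : (∑ c : Fin n, ∑ a, ∑ b : Fin m,
        A⁻¹ a b * (U d i * pd a c (pd b c (pd d j f)) U))
        = U d i * ∑ c : Fin n, ∑ a, ∑ b : Fin m,
            A⁻¹ a b * pd a c (pd b c (pd d j f)) U := by
      rw [Finset.mul_sum]
      refine Finset.sum_congr rfl fun c _ => ?_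
      rw [Finset.mul_sum]
      refine Finset.sum_congr rfl fun a _ => ?_
      rw [Finset.mul_sum]
      refine Finset.sum_congr rfl fun b _ => ?_
      ring
    rw [pull]
    rfl
  rw [part1, part2]
lemma comm_iter (hAs : Aᵀ = A) (i j : Fin n) :
    ∀ k : ℕ, 1 ≤ k → ∀ f : (Fin m → Fin n → ℝ) → ℝ, Sm f → ∀ U,
    eulerOp i j ((trLapA A)^[k] f) U - (trLapA A)^[k] (eulerOp i j f) U
      = -(2 * k : ℝ) * lapA A i j ((trLapA A)^[k - 1] f) U := by
  refine Nat.le_induction ?_ ?_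
  · intro f hf U
    have h := congrFun (base_comm hAs hf i j) U
    simp only [Nat.sub_self, Function.iterate_one, Function.iterate_zero_apply, Nat.cast_one]
    push_cast
    linarith [h]
  · intro k hk ih f hf U
    have h1 := ih (trLapA A f) (trLapA_smooth hf) U
    have e1 : (trLapA A)^[k] (trLapA A f) = (trLapA A)^[k + 1] f :=
      (Function.iterate_succ_apply _ _ _).symm
    have e2 : (trLapA A)^[k - 1] (trLapA A f) = (trLapA A)^[k] f := by
      rw [← Function.iterate_succ_apply]
      congr 1
      omega
    rw [e1, e2] at h1
    have hiter : (trLapA A)^[k + 1] (eulerOp i j f) U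
        = 2 * lapA A i j ((trLapA A)^[k] f) U
          + (trLapA A)^[k] (eulerOp i j (trLapA A f)) U := by
      rw [Function.iterate_succ_apply, base_comm hAs hf i j,
        trLapA_iter_lin (lapA_smooth hf i j) (euler_smooth (trLapA_smooth hf) i j) 2 k,
        trLapA_iter_lapA hf i j k]
    rw [hiter, Nat.add_sub_cancel]
    push_cast
    linear_combination h1


end Aux

/-- for symmetric invertible `A`, the commutator identity
`[E_{ij}, (tr Δ_A)^k] = −2k (Δ_A)_{ij} (tr Δ_A)^{k−1}` holds on smooth
functions on `ℝ^(m×n)`. -/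
theorem stmt4 {m n : ℕ} (A : Matrix (Fin m) (Fin m) ℝ) (hAs : Aᵀ = A)
    (hA : IsUnit A.det) (i j : Fin n) (k : ℕ) (hk : 1 ≤ k)
    (f : (Fin m → Fin n → ℝ) → ℝ) (hf : ContDiff ℝ (⊤ : ℕ∞) f)
    (U : Fin m → Fin n → ℝ) :
    eulerOp i j ((trLapA A)^[k] f) U - (trLapA A)^[k] (eulerOp i j f) U =
      -(2 * k : ℝ) * lapA A i j ((trLapA A)^[k - 1] f) U :=
  comm_iter hAs i j k hk f (hf.of_le (by simp)) U
end

section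
/- Let g be a polynomial on ℝ^(m×n) and set f = exp(−tr Δ_A / (8π)) g (a finite sum since g is a polynomial). Then f satisfies (E − Δ_A/(4π)) f = λ · I · f if and only if g satisfies E g = λ · I · g. -/
/-!
Write `T = tr Δ_A`. On polynomials the operators satisfy `T E_ij = E_ij T + Δ_ji + Δ_ij` and
`Δ_ij` commutes with `T`; for symmetric `A` also `Δ_ji = Δ_ij`. In any ring these relations give
`E_ij exp(cT) = exp(cT) E_ij - 2c Δ_ij exp(cT)` for the truncated exponential, and `T` lowers the
total degree by two, so the truncation is harmless. With `c = -1/(8π)` this reads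
`(E_ij - Δ_ij/(4π)) exp(cT) g = exp(cT) (E_ij g)`, and the theorem follows because `exp(cT)` is
injective: `exp(cT) p = p + T q` with `deg q ≤ deg p`, so `exp(cT) p = 0` forces
`deg p ≤ deg p - 2`, i.e. `p` and `q` are constant, whence `T q = 0` and `p = 0`.
-/

open scoped BigOperators
open Matrix MvPolynomial

/-- Entry `(i,j)` of the generalized Laplacian `Δ_A` acting on polynomials. -/
noncomputable def lapPoly {m n : ℕ} (A : Matrix (Fin m) (Fin m) ℝ) (i j : Fin n)
    (p : MvPolynomial (Fin m × Fin n) ℝ) : MvPolynomial (Fin m × Fin n) ℝ :=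
  ∑ a, ∑ b, MvPolynomial.C (A⁻¹ a b) * pderiv (a, i) (pderiv (b, j) p)

/-- The trace `tr Δ_A` acting on polynomials. -/
noncomputable def trLapPoly {m n : ℕ} (A : Matrix (Fin m) (Fin m) ℝ)
    (p : MvPolynomial (Fin m × Fin n) ℝ) : MvPolynomial (Fin m × Fin n) ℝ :=
  ∑ c : Fin n, lapPoly A c c p

/-- Entry `(i,j)` of the generalized Euler operator on polynomials. -/
noncomputable def eulerPoly {m n : ℕ} (i j : Fin n)
    (p : MvPolynomial (Fin m × Fin n) ℝ) : MvPolynomial (Fin m × Fin n) ℝ :=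
  ∑ d, X (d, i) * pderiv (d, j) p

/-- `exp(c · tr Δ_A)` applied to a polynomial (a finite sum). -/
noncomputable def expTrLap {m n : ℕ} (A : Matrix (Fin m) (Fin m) ℝ) (c : ℝ)
    (p : MvPolynomial (Fin m × Fin n) ℝ) : MvPolynomial (Fin m × Fin n) ℝ :=
  ∑ k ∈ Finset.range (p.totalDegree + 1),
    (c ^ k / k.factorial : ℝ) • (trLapPoly A)^[k] p

open Finset
open scoped Nat

section Algebra

variable {𝕜 R : Type*} [Field 𝕜] [Ring R] [Algebra 𝕜 R]

noncomputable def truncExp (c : 𝕜) (T : R) (N : ℕ) : R :=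
  ∑ k ∈ range N, (c ^ k / k !) • T ^ k

theorem pow_succ_mul_of_mul_eq {T E D : R} (hTE : T * E = E * T + D) (hTD : Commute T D)
    (k : ℕ) : T ^ (k + 1) * E = E * T ^ (k + 1) + (k + 1) • (D * T ^ k) := by
  induction k with
  | zero => simpa using hTE
  | succ k ih =>
    calc T ^ (k + 1 + 1) * E = T * (T ^ (k + 1) * E) := by rw [pow_succ' T (k + 1), mul_assoc]
      _ = (T * E) * T ^ (k + 1) + (k + 1) • ((T * D) * T ^ k) := by
        rw [ih, mul_add, mul_smul_comm, mul_assoc, mul_assoc]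
      _ = E * T ^ (k + 1 + 1) + (k + 1 + 1) • (D * T ^ (k + 1)) := by
        rw [hTE, hTD.eq, add_mul, mul_assoc, mul_assoc, ← pow_succ', ← pow_succ',
          succ_nsmul _ (k + 1)]
        abel

theorem truncExp_succ (c : 𝕜) (T : R) (N : ℕ) :
    truncExp c T (N + 1) = 1 + T * ∑ k ∈ range N, (c ^ (k + 1) / (k + 1)!) • T ^ k := by
  simp only [truncExp, sum_range_succ', mul_sum, mul_smul_comm, pow_succ']
  simp [add_comm]

theorem mul_truncExp_succ [CharZero 𝕜] (c : 𝕜) {T E D : R} (hTE : T * E = E * T + D)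
    (hTD : Commute T D) (N : ℕ) :
    E * truncExp c T (N + 1) = truncExp c T (N + 1) * E - c • (D * truncExp c T N) := by
  have hterm (k : ℕ) : (c ^ (k + 1) / (k + 1)!) • (E * T ^ (k + 1)) =
      (c ^ (k + 1) / (k + 1)!) • (T ^ (k + 1) * E) - c • ((c ^ k / k !) • (D * T ^ k)) := by
    have hcoeff : c ^ (k + 1) / (k + 1)! * (k + 1 : ℕ) = c * (c ^ k / k !) := by
      rw [Nat.factorial_succ]; push_cast; field_simp; ring
    rw [pow_succ_mul_of_mul_eq hTE hTD, smul_add, ← Nat.cast_smul_eq_nsmul 𝕜, smul_smul,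
      smul_smul, hcoeff, add_sub_cancel_right]
  simp only [truncExp, sum_range_succ' _ N, mul_add, add_mul, mul_sum, sum_mul, mul_smul_comm,
    smul_mul_assoc, smul_sum, hterm, sum_sub_distrib]
  simp only [pow_zero, mul_one, one_mul, Nat.factorial_zero, Nat.cast_one, div_one, one_smul]
  abel

end Algebra

section PartialDerivatives

variable {σ R : Type*} [CommSemiring R]

theorem pderiv_pderiv_comm (u v : σ) (p : MvPolynomial σ R) :
    pderiv u (pderiv v p) = pderiv v (pderiv u p) := by
  classical
  induction p using MvPolynomial.induction_on with
  | C a => simp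
  | add p q hp hq => simp [hp, hq]
  | mul_X p w ih =>
    simp only [pderiv_mul, map_add, pderiv_X, ih, Pi.single_apply]
    split_ifs <;> simp; ring

theorem commute_pderiv (u v : σ) :
    Commute (pderiv (R := R) u).toLinearMap (pderiv v).toLinearMap :=
  LinearMap.ext fun p => pderiv_pderiv_comm u v p

theorem totalDegree_pderiv_le (i : σ) (p : MvPolynomial σ R) :
    (pderiv i p).totalDegree ≤ p.totalDegree - 1 := by
  refine Finset.sup_le fun s hs => ?_
  have hcoeff : coeff (s + Finsupp.single i 1) p ≠ 0 := by
    rw [mem_support_iff, coeff_pderiv] at hs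
    exact left_ne_zero_of_mul hs
  have := le_totalDegree (mem_support_iff.2 hcoeff)
  rw [Finsupp.sum_add_index' (fun _ => rfl) (fun _ _ _ => rfl),
    Finsupp.sum_single_index rfl] at this
  omega

theorem pderiv_eq_zero_of_totalDegree_eq_zero (i : σ) {p : MvPolynomial σ R}
    (hp : p.totalDegree = 0) : pderiv i p = 0 := by
  rw [totalDegree_eq_zero_iff_eq_C.1 hp, pderiv_C]

end PartialDerivatives

section Operators

variable {m n : ℕ}

noncomputable def lapPolyLin (A : Matrix (Fin m) (Fin m) ℝ) (i j : Fin n) :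
    Module.End ℝ (MvPolynomial (Fin m × Fin n) ℝ) :=
  ∑ a, ∑ b, A⁻¹ a b • ((pderiv (a, i)).toLinearMap * (pderiv (b, j)).toLinearMap)

noncomputable def trLapPolyLin (A : Matrix (Fin m) (Fin m) ℝ) :
    Module.End ℝ (MvPolynomial (Fin m × Fin n) ℝ) :=
  ∑ c, lapPolyLin A c c

noncomputable def eulerPolyLin (i j : Fin n) : Module.End ℝ (MvPolynomial (Fin m × Fin n) ℝ) :=
  ∑ d, LinearMap.mulLeft ℝ (X (d, i)) * (pderiv (d, j)).toLinearMap

variable (A : Matrix (Fin m) (Fin m) ℝ) (i j : Fin n) (p : MvPolynomial (Fin m × Fin n) ℝ)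

@[simp] theorem coe_lapPolyLin : ⇑(lapPolyLin A i j) = lapPoly A i j :=
  funext fun p => by simp [lapPolyLin, lapPoly, smul_eq_C_mul]

@[simp] theorem coe_trLapPolyLin : ⇑(trLapPolyLin (n := n) A) = trLapPoly A :=
  funext fun p => by simp [trLapPolyLin, trLapPoly]

@[simp] theorem coe_eulerPolyLin : ⇑(eulerPolyLin (m := m) i j) = eulerPoly i j :=
  funext fun p => by simp [eulerPolyLin, eulerPoly]

theorem pderiv_eulerPoly (a : Fin m) (c : Fin n) :
    pderiv (a, c) (eulerPoly i j p) =
      eulerPoly i j (pderiv (a, c) p) + if c = i then pderiv (a, j) p else 0 := by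
  split_ifs with hci
  · subst hci
    simp [eulerPoly, pderiv_X, Pi.single_apply, sum_add_distrib, pderiv_pderiv_comm (a, c),
      add_comm]
  · simp [eulerPoly, pderiv_X, pderiv_pderiv_comm (a, c), hci]

theorem lapPoly_eulerPoly (k l : Fin n) :
    lapPoly A k l (eulerPoly i j p) = eulerPoly i j (lapPoly A k l p) +
      ((if k = i then lapPoly A j l p else 0) + if l = i then lapPoly A k j p else 0) := by
  have h (a b : Fin m) : pderiv (a, k) (pderiv (b, l) (eulerPoly i j p)) =
      eulerPoly i j (pderiv (a, k) (pderiv (b, l) p)) +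
        ((if k = i then pderiv (a, j) (pderiv (b, l) p) else 0) +
          if l = i then pderiv (a, k) (pderiv (b, j) p) else 0) := by
    rw [pderiv_eulerPoly, map_add, pderiv_eulerPoly]
    split_ifs <;> simp [add_assoc]
  simp only [lapPoly, h, mul_add, sum_add_distrib, mul_ite, mul_zero]
  simp only [← coe_eulerPolyLin, ← smul_eq_C_mul, map_sum, map_smul]
  split_ifs <;> simp

theorem trLapPoly_eulerPoly :
    trLapPoly A (eulerPoly i j p) =
      eulerPoly i j (trLapPoly A p) + (lapPoly A j i p + lapPoly A i j p) := by
  simp only [trLapPoly, lapPoly_eulerPoly, sum_add_distrib, sum_ite_eq', mem_univ, if_true]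
  rw [← coe_eulerPolyLin, map_sum]

theorem trLapPolyLin_mul_eulerPolyLin :
    trLapPolyLin A * eulerPolyLin i j =
      eulerPolyLin i j * trLapPolyLin A + (lapPolyLin A j i + lapPolyLin A i j) :=
  LinearMap.ext fun p => by simp [trLapPoly_eulerPoly]

theorem commute_lapPolyLin (B : Matrix (Fin m) (Fin m) ℝ) (k l : Fin n) :
    Commute (lapPolyLin A i j) (lapPolyLin B k l) := by
  refine .sum_left _ _ _ fun a _ => .sum_left _ _ _ fun b _ => .sum_right _ _ _ fun a' _ =>
    .sum_right _ _ _ fun b' _ => ((?_ : Commute _ _).smul_left _).smul_right _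
  exact .mul_left (.mul_right (commute_pderiv _ _) (commute_pderiv _ _))
    (.mul_right (commute_pderiv _ _) (commute_pderiv _ _))

theorem commute_trLapPolyLin_lapPolyLin (B : Matrix (Fin m) (Fin m) ℝ) (k l : Fin n) :
    Commute (trLapPolyLin A) (lapPolyLin B k l) :=
  .sum_left _ _ _ fun c _ => commute_lapPolyLin A c c B k l

theorem lapPoly_comm (hA : Aᵀ = A) : lapPoly A j i p = lapPoly A i j p := by
  have hinv (a b : Fin m) : A⁻¹ b a = A⁻¹ a b := by
    rw [← Matrix.transpose_apply A⁻¹, Matrix.transpose_nonsing_inv, hA]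
  rw [lapPoly, Finset.sum_comm]
  simp [lapPoly, hinv, pderiv_pderiv_comm (_, j)]

end Operators

section Exponential

variable {m n : ℕ} (A : Matrix (Fin m) (Fin m) ℝ) (p : MvPolynomial (Fin m × Fin n) ℝ)

theorem totalDegree_trLapPoly_le : (trLapPoly A p).totalDegree ≤ p.totalDegree - 2 := by
  rw [← mem_restrictTotalDegree]
  simp only [trLapPoly, lapPoly, ← smul_eq_C_mul]
  refine Submodule.sum_mem _ fun c _ => Submodule.sum_mem _ fun a _ =>
    Submodule.sum_mem _ fun b _ => Submodule.smul_mem _ _ ?_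
  rw [mem_restrictTotalDegree]
  have := totalDegree_pderiv_le (a, c) (pderiv (b, c) p)
  have := totalDegree_pderiv_le (b, c) p
  omega

theorem trLapPoly_eq_zero_of_totalDegree_eq_zero (hp : p.totalDegree = 0) :
    trLapPoly A p = 0 := by
  simp [trLapPoly, lapPoly, pderiv_eq_zero_of_totalDegree_eq_zero _ hp]

theorem totalDegree_trLapPoly_iterate_le (k : ℕ) :
    ((trLapPoly A)^[k] p).totalDegree ≤ p.totalDegree - 2 * k := by
  induction k with
  | zero => simp
  | succ k ih =>
    rw [Function.iterate_succ_apply']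
    have := totalDegree_trLapPoly_le A ((trLapPoly A)^[k] p)
    omega

theorem trLapPoly_iterate_eq_zero {k : ℕ} (hk : p.totalDegree < k) :
    (trLapPoly A)^[k] p = 0 := by
  obtain ⟨k, rfl⟩ := Nat.exists_eq_add_one_of_ne_zero (by omega : k ≠ 0)
  rw [Function.iterate_succ_apply']
  apply trLapPoly_eq_zero_of_totalDegree_eq_zero
  have := totalDegree_trLapPoly_iterate_le A p k
  omega

theorem expTrLap_eq_truncExp (c : ℝ) {N : ℕ} (hN : p.totalDegree < N) :
    expTrLap A c p = truncExp c (trLapPolyLin A) N p := by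
  simp only [expTrLap, truncExp, LinearMap.sum_apply, LinearMap.smul_apply,
    Module.End.pow_apply, coe_trLapPolyLin]
  refine sum_subset (range_subset_range.2 hN) fun k _ hk => ?_
  rw [trLapPoly_iterate_eq_zero A p (by simpa using hk), smul_zero]

theorem truncExp_trLapPolyLin_injective (c : ℝ) (N : ℕ) :
    Function.Injective (truncExp c (trLapPolyLin (n := n) A) (N + 1) : Module.End ℝ _) := by
  refine (injective_iff_map_eq_zero _).2 fun p hp => ?_
  set q := (∑ k ∈ range N, (c ^ (k + 1) / (k + 1)!) • trLapPolyLin A ^ k) p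
  have hq : q.totalDegree ≤ p.totalDegree := by
    rw [← mem_restrictTotalDegree]
    simp only [q, LinearMap.sum_apply, LinearMap.smul_apply,
      Module.End.pow_apply, coe_trLapPolyLin]
    refine Submodule.sum_mem _ fun k _ => Submodule.smul_mem _ _ ?_
    rw [mem_restrictTotalDegree]
    exact (totalDegree_trLapPoly_iterate_le A p k).trans (Nat.sub_le _ _)
  rw [truncExp_succ, LinearMap.add_apply, Module.End.one_apply, Module.End.mul_apply,
    coe_trLapPolyLin] at hp
  have hTq := eq_neg_of_add_eq_zero_right hp
  have hp0 : p.totalDegree = 0 := by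
    have := totalDegree_trLapPoly_le A q
    rw [hTq, totalDegree_neg] at this
    omega
  rw [trLapPoly_eq_zero_of_totalDegree_eq_zero A q (by omega)] at hTq
  exact neg_eq_zero.1 hTq.symm

theorem expTrLap_injective (c : ℝ) : Function.Injective (expTrLap (n := n) A c) := by
  intro p q hpq
  have hp : p.totalDegree < max p.totalDegree q.totalDegree + 1 := by omega
  have hq : q.totalDegree < max p.totalDegree q.totalDegree + 1 := by omega
  rw [expTrLap_eq_truncExp A p c hp, expTrLap_eq_truncExp A q c hq] at hpq
  exact truncExp_trLapPolyLin_injective A c _ hpq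

theorem expTrLap_smul (c r : ℝ) : expTrLap A c (r • p) = r • expTrLap A c p := by
  have hp : p.totalDegree < p.totalDegree + 1 := Nat.lt_add_one _
  rw [expTrLap_eq_truncExp A p c hp,
    expTrLap_eq_truncExp A _ c ((totalDegree_smul_le r p).trans_lt hp), map_smul]

theorem eulerPoly_expTrLap (hA : Aᵀ = A) (i j : Fin n) (c : ℝ) :
    eulerPoly i j (expTrLap A c p) =
      expTrLap A c (eulerPoly i j p) - (2 * c) • lapPoly A i j (expTrLap A c p) := by
  set N := p.totalDegree + (eulerPoly i j p).totalDegree + 1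
  have h := LinearMap.congr_fun (mul_truncExp_succ c (trLapPolyLin_mul_eulerPolyLin A i j)
    ((commute_trLapPolyLin_lapPolyLin ..).add_right (commute_trLapPolyLin_lapPolyLin ..)) N) p
  simp only [Module.End.mul_apply, LinearMap.sub_apply, LinearMap.smul_apply,
    LinearMap.add_apply, coe_eulerPolyLin, coe_lapPolyLin] at h
  rw [← expTrLap_eq_truncExp A p c (by omega), ← expTrLap_eq_truncExp A p c (by omega),
    ← expTrLap_eq_truncExp A _ c (by omega), lapPoly_comm A i j _ hA, ← two_smul ℝ,
    smul_smul, mul_comm c] at h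
  exact h

end Exponential

theorem stmt6_general {m n : ℕ} (A : Matrix (Fin m) (Fin m) ℝ) (hAs : Aᵀ = A)
    (lam : ℤ) (g : MvPolynomial (Fin m × Fin n) ℝ) :
    (∀ i j : Fin n,
        eulerPoly i j (expTrLap A (-(8 * Real.pi)⁻¹) g) -
            ((4 * Real.pi)⁻¹ : ℝ) • lapPoly A i j (expTrLap A (-(8 * Real.pi)⁻¹) g) =
          ((lam : ℝ) * if i = j then 1 else 0) • expTrLap A (-(8 * Real.pi)⁻¹) g) ↔
    (∀ i j : Fin n,
        eulerPoly i j g = ((lam : ℝ) * if i = j then 1 else 0) • g) := by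
  have hcoeff : 2 * -(8 * Real.pi)⁻¹ + (4 * Real.pi)⁻¹ = 0 := by ring
  have key (i j : Fin n) :
      eulerPoly i j (expTrLap A (-(8 * Real.pi)⁻¹) g) -
          ((4 * Real.pi)⁻¹ : ℝ) • lapPoly A i j (expTrLap A (-(8 * Real.pi)⁻¹) g) =
        expTrLap A (-(8 * Real.pi)⁻¹) (eulerPoly i j g) := by
    rw [eulerPoly_expTrLap A g hAs, sub_sub, ← add_smul, hcoeff, zero_smul, sub_zero]
  refine forall₂_congr fun i j => ?_
  rw [key, ← expTrLap_smul, (expTrLap_injective A _).eq_iff]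

/-- with `f = exp(−tr Δ_A/(8π)) g` for a polynomial `g`,
`(E − Δ_A/(4π)) f = λ·I·f` holds iff `E g = λ·I·g`. -/
theorem stmt6 {m n : ℕ} (A : Matrix (Fin m) (Fin m) ℝ) (hAs : Aᵀ = A)
    (hA : IsUnit A.det) (lam : ℤ) (g : MvPolynomial (Fin m × Fin n) ℝ) :
    (∀ i j : Fin n,
        eulerPoly i j (expTrLap A (-(8 * Real.pi)⁻¹) g) -
            ((4 * Real.pi)⁻¹ : ℝ) • lapPoly A i j (expTrLap A (-(8 * Real.pi)⁻¹) g) =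
          ((lam : ℝ) * if i = j then 1 else 0) • expTrLap A (-(8 * Real.pi)⁻¹) g) ↔
    (∀ i j : Fin n,
        eulerPoly i j g = ((lam : ℝ) * if i = j then 1 else 0) • g) :=
  stmt6_general A hAs lam g
end

section
/- Let A ∈ ℤ^(m×m) be symmetric positive definite, S ∈ ℤ^(n×n) symmetric, H, K ∈ ℝ^(m×n), and f with f(U) exp(−π tr(UᵀAU)) Schwartz. Then the theta series θ_{H,K}(Z) = det Y^{−λ/2} Σ_{U ∈ H+ℤ^(m×n)} f(UY^{1/2}) e(tr(UᵀAUZ)/2 + tr(KᵀAU)) satisfies θ_{H,K}(Z+S) = e(−tr(HᵀAHS)/2 − tr(S₀ 1_{nm} A₀ H)/2) · θ_{H,K̃}(Z), where K̃ = K + HS + (1/2) A^{−1} A₀ 1_{mn} S₀. -/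
open scoped BigOperators
open Matrix

open scoped ComplexOrder in
/-- The square root of a positive semidefinite matrix (the definition of
`Matrix.PosSemidef.sqrt` in the older Mathlib, which has since been removed). -/
noncomputable def Matrix.PosSemidef.sqrt {n : Type*} [Fintype n] [DecidableEq n] {𝕜 : Type*}
    [RCLike 𝕜] {A : Matrix n n 𝕜} (hA : A.PosSemidef) : Matrix n n 𝕜 :=
  (hA.1.eigenvectorUnitary : Matrix n n 𝕜) * diagonal ((↑) ∘ (√·) ∘ hA.1.eigenvalues) *
    (star (hA.1.eigenvectorUnitary : Matrix n n 𝕜))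

/-- The Siegel theta series `θ_{H,K}(Z)` with characteristics `H, K`,
associated with `f` and the integral matrix `A`; `Ysq` denotes the square root
`Y^{1/2}` of `Y = Im Z` and `Ydet` its determinant (these depend only on
`Im Z`, which is unchanged by `Z ↦ Z + S` for real `S`). -/
noncomputable def theta {m n : ℕ} (A : Matrix (Fin m) (Fin m) ℤ) (lam : ℤ)
    (f : (Fin m → Fin n → ℝ) → ℝ) (Ysq : Matrix (Fin n) (Fin n) ℝ) (Ydet : ℝ)
    (H K : Matrix (Fin m) (Fin n) ℝ) (Z : Matrix (Fin n) (Fin n) ℂ) : ℂ :=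
  ((Ydet ^ (-(lam : ℝ) / 2) : ℝ) : ℂ) *
    ∑' R : Matrix (Fin m) (Fin n) ℤ,
      ((f fun a b => ((H + R.map (Int.cast : ℤ → ℝ)) * Ysq) a b : ℝ) : ℂ) *
        Complex.exp (2 * Real.pi * Complex.I *
          ((((H + R.map (Int.cast : ℤ → ℝ)).map (Complex.ofReal : ℝ → ℂ))ᵀ *
                A.map (Int.cast : ℤ → ℂ) *
                ((H + R.map (Int.cast : ℤ → ℝ)).map (Complex.ofReal : ℝ → ℂ)) *
                Z).trace / 2 +
            ((K.map (Complex.ofReal : ℝ → ℂ))ᵀ * A.map (Int.cast : ℤ → ℂ) *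
                ((H + R.map (Int.cast : ℤ → ℝ)).map
                  (Complex.ofReal : ℝ → ℂ))).trace))

/-!
Each summand of `θ_{H,K}(Z + S)` is the corresponding summand of `θ_{H,K̃}(Z)` times the phase
`e(tr(UᵀAUS)/2 + tr(KᵀAU) - tr(K̃ᵀAU))`, `U = H + R`. Expanding `U` and using the symmetry of
`A` and `S`, this exponent is `-tr(HᵀAHS)/2 - tr(S₀ 1 A₀ H)/2` plus `(tr(RᵀARS) - tr(S₀ 1 A₀ R))/2`,
and the last term is an integer: modulo 2, `tr(MS) ≡ ∑ⱼ Mⱼⱼ Sⱼⱼ` for symmetric `M, S` because the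
off-diagonal terms pair up, and `(RᵀAR)ⱼⱼ ≡ ∑ᵢ Aᵢᵢ Rᵢⱼ² ≡ ∑ᵢ Aᵢᵢ Rᵢⱼ`.
-/

namespace CharTwo

variable {R : Type*} [CommRing R] [CharP R 2] {ι κ : Type*} [Fintype ι] [DecidableEq ι]

theorem sum_sum_eq_sum_diag_of_symm (f : ι → ι → R) (hf : ∀ i j, f i j = f j i) :
    ∑ i, ∑ j, f i j = ∑ i, f i i := by
  rw [← Finset.sum_product', ← Finset.diag_union_offDiag,
    Finset.sum_union (Finset.disjoint_diag_offDiag _), Finset.sum_diag, add_eq_left]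
  refine Finset.sum_involution (fun p _ => p.swap) (fun p _ => ?_) (fun p hp _ h => ?_)
    (fun p hp => by simpa [and_comm, eq_comm] using hp) (fun p _ => p.swap_swap)
  · simp only [Prod.fst_swap, Prod.snd_swap, hf p.2, add_self_eq_zero]
  · exact (Finset.mem_offDiag.1 hp).2.2 (congrArg Prod.snd h)

theorem trace_mul_of_isSymm {M N : Matrix ι ι R} (hM : M.IsSymm) (hN : N.IsSymm) :
    (M * N).trace = ∑ i, M i i * N i i :=
  sum_sum_eq_sum_diag_of_symm _ fun i j => by
    change M i j * N j i = M j i * N i j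
    rw [hM.apply, hN.apply]

theorem transpose_mul_mul_apply_self {A : Matrix ι ι R} (hA : A.IsSymm) (V : Matrix ι κ R)
    (j : κ) : (Vᵀ * A * V) j j = ∑ i, A i i * V i j ^ 2 := by
  simp only [mul_apply, transpose_apply, Finset.sum_mul]
  rw [Finset.sum_comm, sum_sum_eq_sum_diag_of_symm _ fun i k => by rw [hA.apply]; ring]
  exact Finset.sum_congr rfl fun i _ => by ring

end CharTwo

theorem Matrix.IsSymm.transpose_mul_mul {ι κ R : Type*} [Fintype κ] [CommSemiring R]
    {A : Matrix κ κ R} (hA : A.IsSymm) (V : Matrix κ ι R) : (Vᵀ * A * V).IsSymm := by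
  simp only [IsSymm, transpose_mul, transpose_transpose, hA.eq, Matrix.mul_assoc]

section Casts

variable {l ι κ : Type*}

theorem Matrix.map_intCast_mul {R : Type*} [Ring R] [Fintype κ] (M : Matrix l κ ℤ)
    (N : Matrix κ ι ℤ) :
    (M * N).map (Int.cast : ℤ → R) =
      (M.map Int.cast : Matrix l κ R) * (N.map Int.cast : Matrix κ ι R) := by
  ext
  simp [mul_apply]

theorem Matrix.map_intCast_ones {R : Type*} [Ring R] :
    (of fun (_ : l) (_ : κ) => (1 : ℤ)).map (Int.cast : ℤ → R) = of fun _ _ => 1 := by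
  ext
  simp

theorem Matrix.trace_map_intCast {R : Type*} [Ring R] [Fintype ι] (M : Matrix ι ι ℤ) :
    (M.map (Int.cast : ℤ → R)).trace = (M.trace : R) :=
  (AddMonoidHom.map_trace (Int.castRingHom R) M).symm

theorem Matrix.map_ofReal_mul [Fintype κ] (M : Matrix l κ ℝ) (N : Matrix κ ι ℝ) :
    (M * N).map Complex.ofReal =
      (M.map Complex.ofReal : Matrix l κ ℂ) * (N.map Complex.ofReal : Matrix κ ι ℂ) := by
  ext
  simp [mul_apply]

theorem Matrix.trace_map_ofReal [Fintype ι] (M : Matrix ι ι ℝ) :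
    (M.map Complex.ofReal).trace = (M.trace : ℂ) :=
  (AddMonoidHom.map_trace Complex.ofRealHom M).symm

end Casts

theorem theta_phase_sub_eq {ι κ 𝕜 : Type*} [Fintype ι] [Fintype κ] [DecidableEq κ] [Field 𝕜]
    [CharZero 𝕜] {A : Matrix κ κ 𝕜} (hA : A.IsSymm) (hdet : IsUnit A.det) {S : Matrix ι ι 𝕜}
    (hS : S.IsSymm) (H K V B : Matrix κ ι 𝕜) :
    ((H + V)ᵀ * A * (H + V) * S).trace / 2 + (Kᵀ * A * (H + V)).trace
        - ((K + H * S + (1 / 2 : 𝕜) • (A⁻¹ * B))ᵀ * A * (H + V)).trace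
        + (Hᵀ * A * H * S).trace / 2 + (Bᵀ * H).trace / 2
      = ((Vᵀ * A * V * S).trace - (Bᵀ * V).trace) / 2 := by
  have hK : (K + H * S + (1 / 2 : 𝕜) • (A⁻¹ * B))ᵀ * A =
      Kᵀ * A + S * (Hᵀ * A) + (1 / 2 : 𝕜) • Bᵀ := by
    rw [transpose_add, transpose_add, transpose_smul, Matrix.add_mul, Matrix.add_mul,
      Matrix.smul_mul, transpose_mul, transpose_mul, transpose_nonsing_inv, hA.eq, hS.eq,
      Matrix.mul_assoc, Matrix.mul_assoc, nonsing_inv_mul _ hdet, Matrix.mul_one]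
  have hcross : (Vᵀ * (A * (H * S))).trace = (Hᵀ * (A * (V * S))).trace := by
    rw [← trace_transpose]
    simp only [transpose_mul, transpose_transpose, hA.eq, hS.eq, Matrix.mul_assoc]
    rw [trace_mul_comm]
    simp only [Matrix.mul_assoc]
  have hcycle (W : Matrix κ ι 𝕜) :
      (S * (Hᵀ * (A * W))).trace = (Hᵀ * (A * (W * S))).trace := by
    rw [trace_mul_comm]
    simp only [Matrix.mul_assoc]
  rw [hK]
  simp only [transpose_add, Matrix.add_mul, Matrix.mul_add, trace_add, Matrix.smul_mul,
    trace_smul, smul_eq_mul, Matrix.mul_assoc, hcycle]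
  linear_combination (1 / 2 : 𝕜) * hcross

section IntegerMatrices

variable {ι κ : Type*} [Fintype ι] [DecidableEq ι] [Fintype κ] [DecidableEq κ]

theorem trace_diagonal_mul_ones_mul_diagonal_mul {R : Type*} [CommSemiring R] (s : ι → R)
    (a : κ → R) (V : Matrix κ ι R) :
    (diagonal s * of (fun (_ : ι) (_ : κ) => (1 : R)) * diagonal a * V).trace =
      ∑ j, ∑ i, s j * a i * V i j := by
  have h : diagonal s * of (fun (_ : ι) (_ : κ) => (1 : R)) * diagonal a =
      of fun j i => s j * a i := by
    ext j i
    simp only [mul_diagonal, diagonal_mul, of_apply, mul_one]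
  simp only [h, trace, diag, mul_apply, of_apply]

theorem trace_transpose_mul_mul_mul_zmod_two {A : Matrix κ κ (ZMod 2)} (hA : A.IsSymm)
    {S : Matrix ι ι (ZMod 2)} (hS : S.IsSymm) (V : Matrix κ ι (ZMod 2)) :
    (Vᵀ * A * V * S).trace =
      (diagonal (fun j => S j j) * of (fun (_ : ι) (_ : κ) => (1 : ZMod 2)) *
        diagonal (fun i => A i i) * V).trace := by
  rw [CharTwo.trace_mul_of_isSymm (hA.transpose_mul_mul V) hS,
    trace_diagonal_mul_ones_mul_diagonal_mul]
  simp only [CharTwo.transpose_mul_mul_apply_self hA, ZMod.pow_card, Finset.sum_mul]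
  exact Finset.sum_congr rfl fun j _ => Finset.sum_congr rfl fun i _ => by ring

theorem two_dvd_trace_transpose_mul_mul_mul_sub {A : Matrix κ κ ℤ} (hA : A.IsSymm)
    {S : Matrix ι ι ℤ} (hS : S.IsSymm) (V : Matrix κ ι ℤ) :
    2 ∣ (Vᵀ * A * V * S).trace -
      (diagonal (fun j => S j j) * of (fun (_ : ι) (_ : κ) => (1 : ℤ)) *
        diagonal (fun i => A i i) * V).trace := by
  refine (ZMod.intCast_eq_intCast_iff_dvd_sub _ _ 2).mp ?_
  rw [← trace_map_intCast, ← trace_map_intCast]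
  simpa [map_intCast_mul, diagonal_map, transpose_map, map_intCast_ones] using
    (trace_transpose_mul_mul_mul_zmod_two (hA.map Int.cast) (hS.map Int.cast)
      (V.map Int.cast)).symm

theorem exists_intCast_eq_theta_phase_sub {A : Matrix κ κ ℤ} (hA : A.IsSymm)
    (hdet : IsUnit (A.map (Int.cast : ℤ → ℝ)).det) {S : Matrix ι ι ℤ} (hS : S.IsSymm)
    (H K : Matrix κ ι ℝ) (R : Matrix κ ι ℤ) :
    ∃ k : ℤ,
      ((H + R.map (Int.cast : ℤ → ℝ))ᵀ * A.map (Int.cast : ℤ → ℝ) *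
            (H + R.map (Int.cast : ℤ → ℝ)) * S.map (Int.cast : ℤ → ℝ)).trace / 2
        + (Kᵀ * A.map (Int.cast : ℤ → ℝ) * (H + R.map (Int.cast : ℤ → ℝ))).trace
        - ((K + H * S.map (Int.cast : ℤ → ℝ) + (1 / 2 : ℝ) • ((A.map (Int.cast : ℤ → ℝ))⁻¹ *
              diagonal (fun i => (A i i : ℝ)) * of (fun (_ : κ) (_ : ι) => (1 : ℝ)) *
              diagonal (fun j => (S j j : ℝ))))ᵀ *
            A.map (Int.cast : ℤ → ℝ) * (H + R.map (Int.cast : ℤ → ℝ))).trace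
        + (Hᵀ * A.map (Int.cast : ℤ → ℝ) * H * S.map (Int.cast : ℤ → ℝ)).trace / 2
        + (diagonal (fun j => (S j j : ℝ)) * of (fun (_ : ι) (_ : κ) => (1 : ℝ)) *
            diagonal (fun i => (A i i : ℝ)) * H).trace / 2
      = k := by
  obtain ⟨k, hk⟩ := two_dvd_trace_transpose_mul_mul_mul_sub hA hS R
  refine ⟨k, ?_⟩
  have hB : (diagonal (fun i => (A i i : ℝ)) * of (fun (_ : κ) (_ : ι) => (1 : ℝ)) *
      diagonal (fun j => (S j j : ℝ)))ᵀ = diagonal (fun j => (S j j : ℝ)) *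
        of (fun (_ : ι) (_ : κ) => (1 : ℝ)) * diagonal (fun i => (A i i : ℝ)) := by
    simp only [transpose_mul, diagonal_transpose, Matrix.mul_assoc]
    rfl
  have key := theta_phase_sub_eq (hA.map Int.cast) hdet (hS.map Int.cast) H K (R.map Int.cast)
    (diagonal (fun i => (A i i : ℝ)) * of (fun (_ : κ) (_ : ι) => (1 : ℝ)) *
      diagonal (fun j => (S j j : ℝ)))
  rw [hB] at key
  have hkR := congrArg (Int.cast : ℤ → ℝ) hk
  push_cast [← trace_map_intCast, map_intCast_mul, diagonal_map Int.cast_zero, transpose_map,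
    map_intCast_ones] at hkR
  simp only [Matrix.mul_assoc] at key hkR ⊢
  rw [key, hkR]
  ring

end IntegerMatrices

theorem stmt17_general {m n : ℕ} (A : Matrix (Fin m) (Fin m) ℤ) (hAsym : Aᵀ = A)
    (hApos : (A.map (Int.cast : ℤ → ℝ)).PosDef)
    (S : Matrix (Fin n) (Fin n) ℤ) (hSsym : Sᵀ = S)
    (H K : Matrix (Fin m) (Fin n) ℝ) (lam : ℤ)
    (Z : Matrix (Fin n) (Fin n) ℂ)
    (hY : (Z.map Complex.im).PosDef)
    (f : (Fin m → Fin n → ℝ) → ℝ) :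
    theta A lam f hY.posSemidef.sqrt (Z.map Complex.im).det H K
        (Z + S.map (Int.cast : ℤ → ℂ)) =
      Complex.exp (2 * Real.pi * Complex.I *
          (-(((Hᵀ * A.map (Int.cast : ℤ → ℝ) * H * S.map Int.cast).trace : ℝ) / 2 +
              (((Matrix.diagonal fun i => (S i i : ℝ)) *
                  (Matrix.of fun (_ : Fin n) (_ : Fin m) => (1 : ℝ)) *
                  (Matrix.diagonal fun i => (A i i : ℝ)) * H).trace : ℝ) / 2) : ℂ)) *
        theta A lam f hY.posSemidef.sqrt (Z.map Complex.im).det H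
          (K + H * S.map (Int.cast : ℤ → ℝ) +
            (1 / 2 : ℝ) • ((A.map (Int.cast : ℤ → ℝ))⁻¹ *
              (Matrix.diagonal fun i => (A i i : ℝ)) *
              (Matrix.of fun (_ : Fin m) (_ : Fin n) => (1 : ℝ)) *
              (Matrix.diagonal fun i => (S i i : ℝ)))) Z := by
  have hAc : A.map (Int.cast : ℤ → ℂ) = (A.map (Int.cast : ℤ → ℝ)).map Complex.ofReal := by
    ext; simp
  have hSc : S.map (Int.cast : ℤ → ℂ) = (S.map (Int.cast : ℤ → ℝ)).map Complex.ofReal := by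
    ext; simp
  unfold theta
  rw [mul_left_comm]
  congr 1
  rw [← tsum_mul_left]
  refine tsum_congr fun R => ?_
  rw [mul_left_comm, ← Complex.exp_add]
  congr 1
  obtain ⟨k, hk⟩ := exists_intCast_eq_theta_phase_sub hAsym
    (isUnit_iff_ne_zero.2 hApos.det_pos.ne') hSsym H K R
  refine Complex.exp_eq_exp_iff_exists_int.mpr ⟨k, ?_⟩
  rw [Matrix.mul_add, trace_add]
  simp only [hAc, hSc, ← transpose_map, ← map_ofReal_mul, trace_map_ofReal]
  have hkC := congrArg Complex.ofReal hk
  push_cast at hkC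
  linear_combination (2 * Real.pi * Complex.I) * hkC

/-- the transformation behavior of the Siegel theta series under
`Z ↦ Z + S` for a symmetric integer matrix `S`. -/
theorem stmt17 {m n : ℕ} (A : Matrix (Fin m) (Fin m) ℤ) (hAsym : Aᵀ = A)
    (hApos : (A.map (Int.cast : ℤ → ℝ)).PosDef)
    (S : Matrix (Fin n) (Fin n) ℤ) (hSsym : Sᵀ = S)
    (H K : Matrix (Fin m) (Fin n) ℝ) (lam : ℤ)
    (Z : Matrix (Fin n) (Fin n) ℂ) (hZs : Zᵀ = Z)
    (hY : (Z.map Complex.im).PosDef)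
    (f : (Fin m → Fin n → ℝ) → ℝ)
    (hf : ∃ φ : SchwartzMap (Fin m → Fin n → ℝ) ℝ, ∀ U : Fin m → Fin n → ℝ,
      φ U = f U * Real.exp (-Real.pi *
        ((Matrix.of U)ᵀ * A.map (Int.cast : ℤ → ℝ) * Matrix.of U).trace)) :
    theta A lam f hY.posSemidef.sqrt (Z.map Complex.im).det H K
        (Z + S.map (Int.cast : ℤ → ℂ)) =
      Complex.exp (2 * Real.pi * Complex.I *
          (-(((Hᵀ * A.map (Int.cast : ℤ → ℝ) * H * S.map Int.cast).trace : ℝ) / 2 +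
              (((Matrix.diagonal fun i => (S i i : ℝ)) *
                  (Matrix.of fun (_ : Fin n) (_ : Fin m) => (1 : ℝ)) *
                  (Matrix.diagonal fun i => (A i i : ℝ)) * H).trace : ℝ) / 2) : ℂ)) *
        theta A lam f hY.posSemidef.sqrt (Z.map Complex.im).det H
          (K + H * S.map (Int.cast : ℤ → ℝ) +
            (1 / 2 : ℝ) • ((A.map (Int.cast : ℤ → ℝ))⁻¹ *
              (Matrix.diagonal fun i => (A i i : ℝ)) *
              (Matrix.of fun (_ : Fin m) (_ : Fin n) => (1 : ℝ)) *
              (Matrix.diagonal fun i => (S i i : ℝ)))) Z :=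
  stmt17_general A hAsym hApos S hSsym H K lam Z hY f
end
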